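/- arXiv:1709.02490 — 2 statements merged into one kernel-verified Lean document; each statement's English description precedes it below -/
import Mathlib

section
/- Consider the Mirror Prox update: given v_t ∈ Z and vectors η_t, ξ_t, define z_t = argmin_{z ∈ Z}{γ_t⟨η_t, z⟩ + V_{v_t}(z)} and v_{t+1} = argmin_{z ∈ Z}{γ_t⟨ξ_t, z⟩ + V_{v_t}(z)}. Then for every z ∈ Z, γ_t⟨ξ_t, z_t - z⟩ ≤ V_{v_t}(z) - V_{v_{t+1}}(z) + (1/2)(γ_t²‖ξ_t - η_t‖²_* - ‖z_t - v_t‖²). -/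
/-!
A prox point `x` minimising `⟪c, ·⟫ + V_v` over `Z` satisfies, by first-order optimality and the
three-point identity of the Bregman divergence, `⟪c, x - y⟫ ≤ V_v(y) - V_x(y) - V_v(x)` for all
`y ∈ Z`. Applying this to `v_{t+1}` tested at `z` and to `z_t` tested at `v_{t+1}` and adding leaves
the error `γ⟪ξ - η, z_t - v_{t+1}⟫ - V_{z_t}(v_{t+1}) - V_{v_t}(z_t)`, which the strong-convexity
bound `V_a(b) ≥ ‖b - a‖² / 2` and Young's inequality `γ d r ≤ (γ² d² + r²) / 2` control.
-/

open scoped RealInnerProductSpace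

section Bregman

variable {E : Type*} [NormedAddCommGroup E] [InnerProductSpace ℝ E]

def bregmanDiv (ω : E → ℝ) (g : E → E) (v z : E) : ℝ := ω z - ω v - ⟪g v, z - v⟫

variable {ω : E → ℝ} {g : E → E}

theorem bregmanDiv_sub_bregmanDiv_sub_bregmanDiv (v w z : E) :
    bregmanDiv ω g v z - bregmanDiv ω g w z - bregmanDiv ω g v w = ⟪g w - g v, z - w⟫ := by
  simp only [bregmanDiv, inner_sub_left, inner_sub_right]
  ring

variable [CompleteSpace E]

theorem IsMinOn.inner_gradient_sub_nonneg {f : E → ℝ} {f' x y : E} {Z : Set E}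
    (hmin : IsMinOn f Z x) (hZ : Convex ℝ Z) (hf : HasGradientAt f f' x)
    (hx : x ∈ Z) (hy : y ∈ Z) : 0 ≤ ⟪f', y - x⟫ := by
  simpa using hmin.localize.hasFDerivWithinAt_nonneg hf.hasFDerivAt.hasFDerivWithinAt
    (sub_mem_posTangentConeAt_of_segment_subset (hZ.segment_subset hx hy))

theorem HasGradientAt.inner_add_bregmanDiv {a v x : E} (hω : HasGradientAt ω (g x) x) :
    HasGradientAt (fun z => ⟪a, z⟫ + bregmanDiv ω g v z) (a + (g x - g v)) x := by
  rw [hasGradientAt_iff_hasFDerivAt] at hω ⊢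
  have hderiv := ((innerSL ℝ a).hasFDerivAt.add ((hω.sub_const (ω v)).sub
    (((innerSL ℝ (g v)).hasFDerivAt).sub_const ⟪g v, v⟫)))
  have hfun : (fun z => ⟪a, z⟫ + bregmanDiv ω g v z) =
      fun z => ⟪a, z⟫ + ((ω z - ω v) - (⟪g v, z⟫ - ⟪g v, v⟫)) := by
    funext z; simp only [bregmanDiv, inner_sub_right]
  rw [hfun]
  refine hderiv.congr_fderiv ?_
  ext z; simp

theorem IsMinOn.inner_sub_le_bregmanDiv {Z : Set E} {c v x y : E}
    (hmin : IsMinOn (fun z => ⟪c, z⟫ + bregmanDiv ω g v z) Z x) (hZ : Convex ℝ Z)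
    (hω : HasGradientAt ω (g x) x) (hx : x ∈ Z) (hy : y ∈ Z) :
    ⟪c, x - y⟫ ≤ bregmanDiv ω g v y - bregmanDiv ω g x y - bregmanDiv ω g v x := by
  have hopt := hmin.inner_gradient_sub_nonneg hZ hω.inner_add_bregmanDiv hx hy
  rw [inner_add_left, ← bregmanDiv_sub_bregmanDiv_sub_bregmanDiv] at hopt
  rw [← neg_sub y, inner_neg_right]
  linarith

theorem HasGradientAt.hasDerivAt_comp_add_smul {f : E → ℝ} {f' v w : E} {t : ℝ}
    (hf : HasGradientAt f f' (v + t • w)) :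
    HasDerivAt (fun s : ℝ => f (v + s • w)) ⟪f', w⟫ t := by
  have hline : HasDerivAt (fun s : ℝ => v + s • w) w t := by
    simpa using ((hasDerivAt_id t).smul_const w).const_add v
  have h := hf.hasFDerivAt.comp_hasDerivAt t hline
  simp only [InnerProductSpace.toDual_apply_apply] at h
  exact h

theorem sq_div_two_le_bregmanDiv {Z : Set E} {nrm : E → ℝ} {v z : E} (hZ : Convex ℝ Z)
    (hhom : ∀ (c : ℝ) (a : E), nrm (c • a) = |c| * nrm a)
    (hω : ∀ x ∈ Z, HasGradientAt ω (g x) x)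
    (hmono : ∀ x ∈ Z, nrm (x - v) ^ 2 ≤ ⟪g x - g v, x - v⟫) (hv : v ∈ Z) (hz : z ∈ Z) :
    nrm (z - v) ^ 2 / 2 ≤ bregmanDiv ω g v z := by
  set w := z - v
  set C := nrm w ^ 2
  -- `φ 0 ≤ φ 1` is the claim; `φ` is monotone because `g` is strongly monotone along `[v, z]`.
  let φ : ℝ → ℝ := fun t => ω (v + t • w) - t * ⟪g v, w⟫ - t ^ 2 / 2 * C
  have hmem : ∀ t ∈ Set.Icc (0 : ℝ) 1, v + t • w ∈ Z := fun t ht => hZ.add_smul_sub_mem hv hz ht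
  have hφ : ∀ t ∈ Set.Icc (0 : ℝ) 1,
      HasDerivAt φ (⟪g (v + t • w) - g v, w⟫ - t * C) t := by
    intro t ht
    have hsq : HasDerivAt (fun s : ℝ => s ^ 2 / 2 * C) (t * C) t := by
      refine (((hasDerivAt_pow 2 t).div_const 2).mul_const C).congr_deriv ?_
      norm_num
    rw [inner_sub_left]
    exact (((hω _ (hmem t ht)).hasDerivAt_comp_add_smul).sub (hasDerivAt_mul_const _)).sub hsq
  have hφ' : ∀ t ∈ interior (Set.Icc (0 : ℝ) 1), 0 ≤ ⟪g (v + t • w) - g v, w⟫ - t * C := by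
    intro t ht
    rw [interior_Icc] at ht
    have h := hmono _ (hmem t (Set.Ioo_subset_Icc_self ht))
    rw [add_sub_cancel_left, hhom, abs_of_pos ht.1, real_inner_smul_right] at h
    nlinarith [ht.1]
  have hmonoφ : MonotoneOn φ (Set.Icc 0 1) :=
    monotoneOn_of_hasDerivWithinAt_nonneg (convex_Icc 0 1)
      (fun t ht => (hφ t ht).continuousAt.continuousWithinAt)
      (fun t ht => (hφ t (interior_subset ht)).hasDerivWithinAt) hφ'
  have h01 := hmonoφ (Set.left_mem_Icc.2 zero_le_one) (Set.right_mem_Icc.2 zero_le_one) zero_le_one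
  simp only [φ, zero_smul, add_zero, one_smul, add_sub_cancel, w] at h01
  simp only [bregmanDiv]
  linarith

end Bregman

theorem mirror_prox_one_step_general {n : ℕ}
    (Z : Set (EuclideanSpace ℝ (Fin n))) (hZconv : Convex ℝ Z)
    (nrm dnrm : EuclideanSpace ℝ (Fin n) → ℝ)
    (hnrm_homog : ∀ (c : ℝ) (a : EuclideanSpace ℝ (Fin n)), nrm (c • a) = |c| * nrm a)
    (hdual : ∀ ξ z : EuclideanSpace ℝ (Fin n), ⟪ξ, z⟫ ≤ dnrm ξ * nrm z)
    (ω : EuclideanSpace ℝ (Fin n) → ℝ)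
    (gradω : EuclideanSpace ℝ (Fin n) → EuclideanSpace ℝ (Fin n))
    (hdiff : ∀ z ∈ Z, HasGradientAt ω (gradω z) z)
    (hstrong : ∀ z' ∈ Z, ∀ z'' ∈ Z,
      ⟪gradω z' - gradω z'', z' - z''⟫ ≥ (nrm (z' - z'')) ^ 2)
    (V : EuclideanSpace ℝ (Fin n) → EuclideanSpace ℝ (Fin n) → ℝ)
    (hV : ∀ z z', V z z' = ω z' - ω z - ⟪gradω z, z' - z⟫)
    (γ : ℝ) (hγ : 0 < γ) (η ξ : EuclideanSpace ℝ (Fin n))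
    (vt zt vt1 : EuclideanSpace ℝ (Fin n)) (hvt : vt ∈ Z) (hzt : zt ∈ Z) (hvt1 : vt1 ∈ Z)
    (hminz : IsMinOn (fun z => γ * ⟪η, z⟫ + V vt z) Z zt)
    (hminv : IsMinOn (fun z => γ * ⟪ξ, z⟫ + V vt z) Z vt1) :
    ∀ z ∈ Z, γ * ⟪ξ, zt - z⟫ ≤
      V vt z - V vt1 z + 1 / 2 * (γ ^ 2 * (dnrm (ξ - η)) ^ 2 - (nrm (zt - vt)) ^ 2) := by
  intro z hz
  obtain rfl : V = bregmanDiv ω gradω := funext fun a => funext fun b => hV a b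
  simp only [← real_inner_smul_left] at hminz hminv
  have hv1 := hminv.inner_sub_le_bregmanDiv hZconv (hdiff vt1 hvt1) hvt1 hz
  have hz1 := hminz.inner_sub_le_bregmanDiv hZconv (hdiff zt hzt) hzt hvt1
  have hbz := sq_div_two_le_bregmanDiv hZconv hnrm_homog hdiff (fun x hx => hstrong x hx vt hvt)
    hvt hzt
  have hbv := sq_div_two_le_bregmanDiv hZconv hnrm_homog hdiff (fun x hx => hstrong x hx zt hzt)
    hzt hvt1
  set r := nrm (vt1 - zt)
  have hdual' : γ * ⟪ξ - η, zt - vt1⟫ ≤ γ * (dnrm (ξ - η) * r) := by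
    have hsymm : nrm (zt - vt1) = r := by simpa using hnrm_homog (-1) (vt1 - zt)
    exact mul_le_mul_of_nonneg_left (hsymm ▸ hdual _ _) hγ.le
  have hyoung : γ * (dnrm (ξ - η) * r) ≤ (γ ^ 2 * dnrm (ξ - η) ^ 2 + r ^ 2) / 2 := by
    nlinarith [sq_nonneg (γ * dnrm (ξ - η) - r)]
  have hsplit : γ * ⟪ξ, zt - z⟫ =
      ⟪γ • ξ, vt1 - z⟫ + ⟪γ • η, zt - vt1⟫ + γ * ⟪ξ - η, zt - vt1⟫ := by
    simp only [real_inner_smul_left, inner_sub_left, inner_sub_right]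
    ring
  linarith

/-- Mirror Prox one-step inequality: with
`z_t = argmin_{z ∈ Z}{γ_t⟨η_t, z⟩ + V_{v_t}(z)}` and
`v_{t+1} = argmin_{z ∈ Z}{γ_t⟨ξ_t, z⟩ + V_{v_t}(z)}`, for every `z ∈ Z`,
`γ_t⟨ξ_t, z_t - z⟩ ≤ V_{v_t}(z) - V_{v_{t+1}}(z) + (1/2)(γ_t²‖ξ_t - η_t‖²_* - ‖z_t - v_t‖²)`. -/
theorem mirror_prox_one_step {n : ℕ}
    (Z : Set (EuclideanSpace ℝ (Fin n))) (hZconv : Convex ℝ Z) (hZcomp : IsCompact Z)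
    (nrm dnrm : EuclideanSpace ℝ (Fin n) → ℝ)
    (hnrm_homog : ∀ (c : ℝ) (a : EuclideanSpace ℝ (Fin n)), nrm (c • a) = |c| * nrm a)
    (hnrm_tri : ∀ a b : EuclideanSpace ℝ (Fin n), nrm (a + b) ≤ nrm a + nrm b)
    (hdual : ∀ ξ z : EuclideanSpace ℝ (Fin n), ⟪ξ, z⟫ ≤ dnrm ξ * nrm z)
    (ω : EuclideanSpace ℝ (Fin n) → ℝ)
    (gradω : EuclideanSpace ℝ (Fin n) → EuclideanSpace ℝ (Fin n))
    (hdiff : ∀ z ∈ Z, HasGradientAt ω (gradω z) z)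
    (hstrong : ∀ z' ∈ Z, ∀ z'' ∈ Z,
      ⟪gradω z' - gradω z'', z' - z''⟫ ≥ (nrm (z' - z'')) ^ 2)
    (V : EuclideanSpace ℝ (Fin n) → EuclideanSpace ℝ (Fin n) → ℝ)
    (hV : ∀ z z', V z z' = ω z' - ω z - ⟪gradω z, z' - z⟫)
    (γ : ℝ) (hγ : 0 < γ) (η ξ : EuclideanSpace ℝ (Fin n))
    (vt zt vt1 : EuclideanSpace ℝ (Fin n)) (hvt : vt ∈ Z) (hzt : zt ∈ Z) (hvt1 : vt1 ∈ Z)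
    (hminz : IsMinOn (fun z => γ * ⟪η, z⟫ + V vt z) Z zt)
    (hminv : IsMinOn (fun z => γ * ⟪ξ, z⟫ + V vt z) Z vt1) :
    ∀ z ∈ Z, γ * ⟪ξ, zt - z⟫ ≤
      V vt z - V vt1 z + 1 / 2 * (γ ^ 2 * (dnrm (ξ - η)) ^ 2 - (nrm (zt - vt)) ^ 2) :=
  mirror_prox_one_step_general Z hZconv nrm dnrm hnrm_homog hdual ω gradω hdiff hstrong V hV γ hγ η
    ξ vt zt vt1 hvt hzt hvt1 hminz hminv
end

section
/- Let f_1,...,f_T be convex functions on X whose gradients are L-Lipschitz: ‖∇f_t(x) - ∇f_t(v)‖_* ≤ L‖x - v‖ for all x, v ∈ X. Running Mirror Prox with η_t = θ_t ∇f_t(v_t), ξ_t = θ_t ∇f_t(x_t) (where x_t = Prox_{v_t}(γ_t η_t), v_{t+1} = Prox_{v_t}(γ_t ξ_t)), and step sizes γ_t = 1/(L sup_{s∈[T]} θ_s), the weighted regret satisfies ∑_{t=1}^T θ_t f_t(x_t) - inf_{x∈X} ∑_{t=1}^T θ_t f_t(x) ≤ Ω L sup_{t∈[T]} θ_t. -/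
/-!
Optimality of the two prox points and the three-point identity for the Bregman divergence give,
for every Mirror Prox step and every `x ∈ X`,
`⟨ξ, u - x⟩ ≤ V_v(x) - V_{v'}(x) + ⟨ξ - η, u - v'⟩ - V_v(u) - V_u(v')`.
Strong convexity of `ω` bounds `V_v(u)` and `V_u(v')` below by `‖u - v‖² / 2` and
`‖u - v'‖² / 2`; smoothness of `f_t` and `γ_t θ_t L ≤ 1` bound the cross term by their sum.
The steps then telescope to at most `V_{v_1}(x) ≤ Ω`, and convexity of `f_t` bounds
`θ_t (f_t(x_t) - f_t(x))` by `θ_t ⟨∇f_t(x_t), x_t - x⟩`.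
-/

open scoped RealInnerProductSpace BigOperators

section MirrorProx

open Set InnerProductSpace

variable {F : Type*} [NormedAddCommGroup F] [InnerProductSpace ℝ F]

-- `bregman ω gradω u z` is the paper's `V_u(z)`.
def bregman (ω : F → ℝ) (gradω : F → F) (u z : F) : ℝ :=
  ω z - ω u - ⟪gradω u, z - u⟫

theorem inner_sub_gradient_eq_bregman (ω : F → ℝ) (gradω : F → F) (p q r : F) :
    ⟪gradω q - gradω p, r - q⟫ =
      bregman ω gradω p r - bregman ω gradω q r - bregman ω gradω p q := by
  simp only [bregman, inner_sub_left, inner_sub_right]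
  ring

variable [CompleteSpace F]

theorem HasGradientAt.hasDerivAt_comp_lineMap {f : F → ℝ} {g x y : F} {s : ℝ}
    (h : HasGradientAt f g (AffineMap.lineMap x y s)) :
    HasDerivAt (fun t => f (AffineMap.lineMap x y t)) ⟪g, y - x⟫ s :=
  h.hasFDerivAt.comp_hasDerivAt s AffineMap.hasDerivAt_lineMap

theorem ConvexOn.inner_gradient_le_sub {X : Set F} {f : F → ℝ} {g x y : F}
    (hf : ConvexOn ℝ X f) (hx : x ∈ X) (hy : y ∈ X) (hg : HasGradientAt f g x) :
    ⟪g, y - x⟫ ≤ f y - f x := by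
  have hline : ConvexOn ℝ (Icc (0 : ℝ) 1) (fun t => f (AffineMap.lineMap x y t)) :=
    (hf.comp_affineMap (AffineMap.lineMap x y)).subset
      (fun t ht => hf.1.lineMap_mem hx hy ht) (convex_Icc 0 1)
  have hderiv := HasGradientAt.hasDerivAt_comp_lineMap (s := 0) (y := y)
    (by rwa [AffineMap.lineMap_apply_zero])
  simpa [slope_def_field] using
    hline.le_slope_of_hasDerivAt (left_mem_Icc.2 zero_le_one) (right_mem_Icc.2 zero_le_one)
      zero_lt_one hderiv

theorem sq_div_two_le_bregman {X : Set F} {ω : F → ℝ} {gradω : F → F} (p : Seminorm ℝ F)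
    (hX : Convex ℝ X) (hω : ∀ z ∈ X, HasGradientAt ω (gradω z) z)
    (hstrong : ∀ z' ∈ X, ∀ z'' ∈ X, p (z' - z'') ^ 2 ≤ ⟪gradω z' - gradω z'', z' - z''⟫)
    {u z : F} (hu : u ∈ X) (hz : z ∈ X) :
    p (z - u) ^ 2 / 2 ≤ bregman ω gradω u z := by
  set c : ℝ → F := fun s => AffineMap.lineMap u z s
  set ψ : ℝ → ℝ := fun s => ω (c s) - s * ⟪gradω u, z - u⟫ - s ^ 2 * (p (z - u) ^ 2 / 2)
  -- `ψ` is nondecreasing on `[0, 1]` by strong monotonicity of `gradω`; `ψ 0 ≤ ψ 1` is the claim.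
  have hcX : ∀ s ∈ Icc (0 : ℝ) 1, c s ∈ X := fun s hs => hX.lineMap_mem hu hz hs
  have hψ : ∀ s ∈ Icc (0 : ℝ) 1,
      HasDerivAt ψ (⟪gradω (c s) - gradω u, z - u⟫ - s * p (z - u) ^ 2) s := by
    intro s hs
    have := (((hω _ (hcX s hs)).hasDerivAt_comp_lineMap).sub
      ((hasDerivAt_id s).mul_const ⟪gradω u, z - u⟫)).sub
      ((hasDerivAt_pow 2 s).mul_const (p (z - u) ^ 2 / 2))
    refine this.congr_deriv ?_
    simp only [inner_sub_left]
    ring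
  have hmono : MonotoneOn ψ (Icc 0 1) := by
    refine monotoneOn_of_hasDerivWithinAt_nonneg (convex_Icc 0 1)
      (fun s hs => (hψ s hs).continuousAt.continuousWithinAt)
      (fun s hs => (hψ s (interior_subset hs)).hasDerivWithinAt) fun s hs => ?_
    rw [interior_Icc] at hs
    have hcs : c s - u = s • (z - u) := AffineMap.lineMap_vsub_left u z s
    have h := hstrong (c s) (hcX s (Ioo_subset_Icc_self hs)) u hu
    rw [hcs, map_smul_eq_mul, Real.norm_eq_abs, abs_of_pos hs.1, real_inner_smul_right] at h
    nlinarith [hs.1]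
  have := hmono (left_mem_Icc.2 zero_le_one) (right_mem_Icc.2 zero_le_one) zero_le_one
  simp only [ψ, c, AffineMap.lineMap_apply_zero, AffineMap.lineMap_apply_one] at this
  simp only [bregman]
  linarith

theorem IsMinOn.inner_sub_le_bregman {X : Set F} {ω : F → ℝ} {gradω : F → F} {ζ v u x : F}
    (hX : Convex ℝ X) (hω : HasGradientAt ω (gradω u) u) (hu : u ∈ X) (hx : x ∈ X)
    (hmin : IsMinOn (fun z => ⟪ζ, z⟫ + bregman ω gradω v z) X u) :
    ⟪ζ, u - x⟫ ≤ bregman ω gradω v x - bregman ω gradω u x - bregman ω gradω v u := by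
  have hgrad : HasFDerivAt (fun z => ⟪ζ, z⟫ + bregman ω gradω v z)
      (innerSL ℝ ζ + (toDual ℝ F (gradω u) - innerSL ℝ (gradω v))) u := by
    refine (innerSL ℝ ζ).hasFDerivAt.add ?_
    have := ((hω.hasFDerivAt.sub_const (ω v)).sub
      ((innerSL ℝ (gradω v)).hasFDerivAt.sub_const ⟪gradω v, v⟫))
    refine this.congr_of_eventuallyEq (Filter.Eventually.of_forall fun z => ?_)
    simp only [bregman, inner_sub_right, Pi.sub_apply, innerSL_apply_apply]
  have hfirst := hmin.localize.hasFDerivWithinAt_nonneg hgrad.hasFDerivWithinAt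
    (sub_mem_posTangentConeAt_of_segment_subset (hX.segment_subset hu hx))
  simp only [add_apply, sub_apply, innerSL_apply_apply, toDual_apply_apply] at hfirst
  have h3 := inner_sub_gradient_eq_bregman ω gradω v u x
  rw [inner_sub_left] at h3
  have hneg : ⟪ζ, x - u⟫ = -⟪ζ, u - x⟫ := by rw [← inner_neg_right, neg_sub]
  linarith

theorem mirror_prox_inner_le {X : Set F} {ω : F → ℝ} {gradω : F → F} {η ξ v u v' x : F}
    (hX : Convex ℝ X) (hω : ∀ z ∈ X, HasGradientAt ω (gradω z) z)
    (hu : u ∈ X) (hv' : v' ∈ X) (hx : x ∈ X)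
    (hu_min : IsMinOn (fun z => ⟪η, z⟫ + bregman ω gradω v z) X u)
    (hv'_min : IsMinOn (fun z => ⟪ξ, z⟫ + bregman ω gradω v z) X v') :
    ⟪ξ, u - x⟫ ≤ bregman ω gradω v x - bregman ω gradω v' x + ⟪ξ - η, u - v'⟫
      - bregman ω gradω v u - bregman ω gradω u v' := by
  have h₁ := hv'_min.inner_sub_le_bregman hX (hω v' hv') hv' hx
  have h₂ := hu_min.inner_sub_le_bregman hX (hω u hu) hu hv'
  have hsplit : ⟪ξ, u - x⟫ = ⟪ξ, v' - x⟫ + ⟪η, u - v'⟫ + ⟪ξ - η, u - v'⟫ := by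
    rw [show u - x = (v' - x) + (u - v') by abel, inner_add_right, inner_sub_left]
    ring
  linarith

theorem mirror_prox_inner_le_of_lipschitz {X : Set F} {ω : F → ℝ} {gradω : F → F}
    (p : Seminorm ℝ F) {dnrm : F → ℝ} (hdual : ∀ ξ z : F, ⟪ξ, z⟫ ≤ dnrm ξ * p z)
    (hX : Convex ℝ X) (hω : ∀ z ∈ X, HasGradientAt ω (gradω z) z)
    (hstrong : ∀ z' ∈ X, ∀ z'' ∈ X, p (z' - z'') ^ 2 ≤ ⟪gradω z' - gradω z'', z' - z''⟫)
    {c L : ℝ} (hc : 0 ≤ c) (hcL : c * L ≤ 1) {w w' v u v' x : F}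
    (hLip : dnrm (w - w') ≤ L * p (u - v))
    (hv : v ∈ X) (hu : u ∈ X) (hv' : v' ∈ X) (hx : x ∈ X)
    (hu_min : IsMinOn (fun z => ⟪c • w', z⟫ + bregman ω gradω v z) X u)
    (hv'_min : IsMinOn (fun z => ⟪c • w, z⟫ + bregman ω gradω v z) X v') :
    c * ⟪w, u - x⟫ ≤ bregman ω gradω v x - bregman ω gradω v' x := by
  have h := mirror_prox_inner_le hX hω hu hv' hx hu_min hv'_min
  rw [← smul_sub, real_inner_smul_left, real_inner_smul_left] at h
  have hvu := sq_div_two_le_bregman p hX hω hstrong hv hu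
  have huv' := sq_div_two_le_bregman p hX hω hstrong hu hv'
  rw [map_sub_rev] at huv'
  have hcross : c * ⟪w - w', u - v'⟫ ≤ p (u - v) ^ 2 / 2 + p (u - v') ^ 2 / 2 := by
    have ha := apply_nonneg p (u - v)
    have hb := apply_nonneg p (u - v')
    calc c * ⟪w - w', u - v'⟫ ≤ c * (L * p (u - v) * p (u - v')) := by
          gcongr
          exact (hdual _ _).trans (mul_le_mul_of_nonneg_right hLip hb)
      _ = (c * L) * (p (u - v) * p (u - v')) := by ring
      _ ≤ p (u - v) * p (u - v') := mul_le_of_le_one_left (mul_nonneg ha hb) hcL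
      _ ≤ p (u - v) ^ 2 / 2 + p (u - v') ^ 2 / 2 := by
          nlinarith [sq_nonneg (p (u - v) - p (u - v'))]
  linarith

theorem sum_mul_sub_le_sum_mul_inner_gradient {X : Set F} {T : ℕ} {f : ℕ → F → ℝ}
    {gradf : ℕ → F → F} {θ : ℕ → ℝ} {xs : ℕ → F} {x : F}
    (hf : ∀ i < T, ConvexOn ℝ X (f i))
    (hgrad : ∀ i < T, HasGradientAt (f i) (gradf i (xs i)) (xs i))
    (hθ : ∀ i < T, 0 ≤ θ i) (hxs : ∀ i < T, xs i ∈ X) (hx : x ∈ X) :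
    ∑ i ∈ Finset.range T, θ i * f i (xs i) - ∑ i ∈ Finset.range T, θ i * f i x ≤
      ∑ i ∈ Finset.range T, θ i * ⟪gradf i (xs i), xs i - x⟫ := by
  rw [← Finset.sum_sub_distrib]
  refine Finset.sum_le_sum fun i hi => ?_
  rw [Finset.mem_range] at hi
  have h := (hf i hi).inner_gradient_le_sub (hxs i hi) hx (hgrad i hi)
  rw [← neg_sub (xs i) x, inner_neg_right] at h
  rw [← mul_sub]
  exact mul_le_mul_of_nonneg_left (by linarith) (hθ i hi)

theorem mirror_prox_sum_inner_le {X : Set F} {ω : F → ℝ} {gradω : F → F}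
    (p : Seminorm ℝ F) {dnrm : F → ℝ} (hdual : ∀ ξ z : F, ⟪ξ, z⟫ ≤ dnrm ξ * p z)
    (hX : Convex ℝ X) (hω : ∀ z ∈ X, HasGradientAt ω (gradω z) z)
    (hstrong : ∀ z' ∈ X, ∀ z'' ∈ X, p (z' - z'') ^ 2 ≤ ⟪gradω z' - gradω z'', z' - z''⟫)
    {T : ℕ} {c : ℕ → ℝ} {L : ℝ} (hc : ∀ i < T, 0 ≤ c i) (hcL : ∀ i < T, c i * L ≤ 1)
    {g : ℕ → F → F} (hLip : ∀ i < T, ∀ x ∈ X, ∀ v ∈ X, dnrm (g i x - g i v) ≤ L * p (x - v))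
    {vs xs : ℕ → F} (hv0 : vs 0 ∈ X)
    (hxstep : ∀ i < T, xs i ∈ X ∧
      IsMinOn (fun z => ⟪c i • g i (vs i), z⟫ + bregman ω gradω (vs i) z) X (xs i))
    (hvstep : ∀ i < T, vs (i + 1) ∈ X ∧
      IsMinOn (fun z => ⟪c i • g i (xs i), z⟫ + bregman ω gradω (vs i) z) X (vs (i + 1)))
    {x : F} (hx : x ∈ X) :
    ∑ i ∈ Finset.range T, c i * ⟪g i (xs i), xs i - x⟫ ≤ bregman ω gradω (vs 0) x := by
  have hvs : ∀ i ≤ T, vs i ∈ X := by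
    rintro (_ | i) hi
    exacts [hv0, (hvstep i hi).1]
  have hstep : ∀ i < T, c i * ⟪g i (xs i), xs i - x⟫ ≤
      bregman ω gradω (vs i) x - bregman ω gradω (vs (i + 1)) x := fun i hi =>
    mirror_prox_inner_le_of_lipschitz p hdual hX hω hstrong (hc i hi) (hcL i hi)
      (hLip i hi _ (hxstep i hi).1 _ (hvs i hi.le)) (hvs i hi.le) (hxstep i hi).1
      (hvstep i hi).1 hx (hxstep i hi).2 (hvstep i hi).2
  have hlast := sq_div_two_le_bregman p hX hω hstrong (hvs T le_rfl) hx
  calc _ ≤ ∑ i ∈ Finset.range T,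
        (bregman ω gradω (vs i) x - bregman ω gradω (vs (i + 1)) x) :=
        Finset.sum_le_sum fun i hi => hstep i (Finset.mem_range.1 hi)
    _ = bregman ω gradω (vs 0) x - bregman ω gradω (vs T) x := Finset.sum_range_sub' _ _
    _ ≤ bregman ω gradω (vs 0) x := by nlinarith [sq_nonneg (p (x - vs T))]

end MirrorProx

theorem mirror_prox_smooth_weighted_regret_general {n T : ℕ}
    (X : Set (EuclideanSpace ℝ (Fin n))) (hXconv : Convex ℝ X)
    (nrm dnrm : EuclideanSpace ℝ (Fin n) → ℝ)
    (hnrm_homog : ∀ (c : ℝ) (a : EuclideanSpace ℝ (Fin n)), nrm (c • a) = |c| * nrm a)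
    (hnrm_tri : ∀ a b : EuclideanSpace ℝ (Fin n), nrm (a + b) ≤ nrm a + nrm b)
    (hdual : ∀ ξ z : EuclideanSpace ℝ (Fin n), ⟪ξ, z⟫ ≤ dnrm ξ * nrm z)
    (ω : EuclideanSpace ℝ (Fin n) → ℝ)
    (gradω : EuclideanSpace ℝ (Fin n) → EuclideanSpace ℝ (Fin n))
    (hdiff : ∀ z ∈ X, HasGradientAt ω (gradω z) z)
    (hstrong : ∀ z' ∈ X, ∀ z'' ∈ X,
      ⟪gradω z' - gradω z'', z' - z''⟫ ≥ (nrm (z' - z'')) ^ 2)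
    (V : EuclideanSpace ℝ (Fin n) → EuclideanSpace ℝ (Fin n) → ℝ)
    (hV : ∀ z z', V z z' = ω z' - ω z - ⟪gradω z, z' - z⟫)
    (f : ℕ → EuclideanSpace ℝ (Fin n) → ℝ)
    (gradf : ℕ → EuclideanSpace ℝ (Fin n) → EuclideanSpace ℝ (Fin n))
    (hfconv : ∀ i < T, ConvexOn ℝ X (f i))
    (hfdiff : ∀ i < T, ∀ x ∈ X, HasGradientAt (f i) (gradf i x) x)
    (L : ℝ) (hL : 0 < L)
    (hLip : ∀ i < T, ∀ x ∈ X, ∀ v ∈ X, dnrm (gradf i x - gradf i v) ≤ L * nrm (x - v))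
    (θ : ℕ → ℝ) (hθnonneg : ∀ i < T, 0 ≤ θ i)
    (hθsum : ∑ i ∈ Finset.range T, θ i = 1)
    (θsup : ℝ) (hθsup : IsGreatest (θ '' {i | i < T}) θsup)
    (Ω : ℝ)
    (γ : ℕ → ℝ) (hγ : ∀ i, γ i = 1 / (L * θsup))
    -- Mirror Prox iterates: v_1 is the ω-center
    (vs xs : ℕ → EuclideanSpace ℝ (Fin n))
    (hv0 : vs 0 ∈ X)
    (hΩwidth : ∀ z ∈ X, V (vs 0) z ≤ Ω)
    (hxstep : ∀ i < T, xs i ∈ X ∧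
      IsMinOn (fun z => γ i * (θ i * ⟪gradf i (vs i), z⟫) + V (vs i) z) X (xs i))
    (hvstep : ∀ i < T, vs (i + 1) ∈ X ∧
      IsMinOn (fun z => γ i * (θ i * ⟪gradf i (xs i), z⟫) + V (vs i) z) X (vs (i + 1))) :
    ∀ x ∈ X,
      ∑ i ∈ Finset.range T, θ i * f i (xs i) - ∑ i ∈ Finset.range T, θ i * f i x ≤
        Ω * L * θsup := by
  intro x hx
  obtain rfl : V = bregman ω gradω := funext fun z => funext (hV z)
  have hθle : ∀ i < T, θ i ≤ θsup := fun i hi => hθsup.2 ⟨i, hi, rfl⟩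
  have hθsup_pos : 0 < θsup := by
    by_contra! h
    have : ∑ i ∈ Finset.range T, θ i ≤ 0 :=
      Finset.sum_nonpos fun i hi => (hθle i (Finset.mem_range.1 hi)).trans h
    linarith
  have hstep_nonneg : ∀ i < T, 0 ≤ γ i * θ i := fun i hi =>
    mul_nonneg (by rw [hγ]; positivity) (hθnonneg i hi)
  have hstep_le : ∀ i < T, γ i * θ i * L ≤ 1 := fun i hi => by
    rw [hγ]
    field_simp
    nlinarith [hθle i hi]
  have hregret := mirror_prox_sum_inner_le (Seminorm.of nrm hnrm_tri fun c a => by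
      rw [hnrm_homog, Real.norm_eq_abs]) hdual hXconv hdiff hstrong hstep_nonneg hstep_le hLip
    hv0 (by simpa only [real_inner_smul_left, mul_assoc] using hxstep)
    (by simpa only [real_inner_smul_left, mul_assoc] using hvstep) hx
  calc _ ≤ ∑ i ∈ Finset.range T, θ i * ⟪gradf i (xs i), xs i - x⟫ :=
        sum_mul_sub_le_sum_mul_inner_gradient hfconv
          (fun i hi => hfdiff i hi _ (hxstep i hi).1) hθnonneg (fun i hi => (hxstep i hi).1) hx
    _ = L * θsup * ∑ i ∈ Finset.range T, γ i * θ i * ⟪gradf i (xs i), xs i - x⟫ := by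
        rw [Finset.mul_sum]
        refine Finset.sum_congr rfl fun i _ => ?_
        rw [hγ]
        field_simp
    _ ≤ L * θsup * Ω := by gcongr; exact hregret.trans (hΩwidth x hx)
    _ = Ω * L * θsup := by ring

/-- Mirror Prox weighted-regret bound for convex losses with
`L`-Lipschitz gradients: with `η_t = θ_t ∇f_t(v_t)`, `ξ_t = θ_t ∇f_t(x_t)`
(`x_t = Prox_{v_t}(γ_t η_t)`, `v_{t+1} = Prox_{v_t}(γ_t ξ_t)`) and step sizes
`γ_t = 1/(L sup_s θ_s)`, the weighted regret is at most `Ω L sup_t θ_t`.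
Index `i ∈ Finset.range T` represents time step `t = i+1`. -/
theorem mirror_prox_smooth_weighted_regret {n T : ℕ} (hT : 0 < T)
    (X : Set (EuclideanSpace ℝ (Fin n))) (hXconv : Convex ℝ X) (hXcomp : IsCompact X)
    (nrm dnrm : EuclideanSpace ℝ (Fin n) → ℝ)
    (hnrm_homog : ∀ (c : ℝ) (a : EuclideanSpace ℝ (Fin n)), nrm (c • a) = |c| * nrm a)
    (hnrm_tri : ∀ a b : EuclideanSpace ℝ (Fin n), nrm (a + b) ≤ nrm a + nrm b)
    (hdual : ∀ ξ z : EuclideanSpace ℝ (Fin n), ⟪ξ, z⟫ ≤ dnrm ξ * nrm z)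
    (ω : EuclideanSpace ℝ (Fin n) → ℝ)
    (gradω : EuclideanSpace ℝ (Fin n) → EuclideanSpace ℝ (Fin n))
    (hdiff : ∀ z ∈ X, HasGradientAt ω (gradω z) z)
    (hstrong : ∀ z' ∈ X, ∀ z'' ∈ X,
      ⟪gradω z' - gradω z'', z' - z''⟫ ≥ (nrm (z' - z'')) ^ 2)
    (V : EuclideanSpace ℝ (Fin n) → EuclideanSpace ℝ (Fin n) → ℝ)
    (hV : ∀ z z', V z z' = ω z' - ω z - ⟪gradω z, z' - z⟫)
    (f : ℕ → EuclideanSpace ℝ (Fin n) → ℝ)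
    (gradf : ℕ → EuclideanSpace ℝ (Fin n) → EuclideanSpace ℝ (Fin n))
    (hfconv : ∀ i < T, ConvexOn ℝ X (f i))
    (hfdiff : ∀ i < T, ∀ x ∈ X, HasGradientAt (f i) (gradf i x) x)
    (L : ℝ) (hL : 0 < L)
    (hLip : ∀ i < T, ∀ x ∈ X, ∀ v ∈ X, dnrm (gradf i x - gradf i v) ≤ L * nrm (x - v))
    (θ : ℕ → ℝ) (hθnonneg : ∀ i < T, 0 ≤ θ i)
    (hθsum : ∑ i ∈ Finset.range T, θ i = 1)
    (θsup : ℝ) (hθsup : IsGreatest (θ '' {i | i < T}) θsup)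
    (Ω : ℝ) (hΩpos : 0 < Ω)
    (γ : ℕ → ℝ) (hγ : ∀ i, γ i = 1 / (L * θsup))
    -- Mirror Prox iterates: v_1 is the ω-center
    (vs xs : ℕ → EuclideanSpace ℝ (Fin n))
    (hv0 : vs 0 ∈ X) (hv0center : IsMinOn ω X (vs 0))
    (hΩwidth : ∀ z ∈ X, V (vs 0) z ≤ Ω)
    (hxstep : ∀ i < T, xs i ∈ X ∧
      IsMinOn (fun z => γ i * (θ i * ⟪gradf i (vs i), z⟫) + V (vs i) z) X (xs i))
    (hvstep : ∀ i < T, vs (i + 1) ∈ X ∧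
      IsMinOn (fun z => γ i * (θ i * ⟪gradf i (xs i), z⟫) + V (vs i) z) X (vs (i + 1))) :
    ∀ x ∈ X,
      ∑ i ∈ Finset.range T, θ i * f i (xs i) - ∑ i ∈ Finset.range T, θ i * f i x ≤
        Ω * L * θsup :=
  mirror_prox_smooth_weighted_regret_general X hXconv nrm dnrm hnrm_homog hnrm_tri hdual ω gradω
    hdiff hstrong V hV f gradf hfconv hfdiff L hL hLip θ hθnonneg hθsum θsup hθsup Ω γ hγ vs xs hv0
    hΩwidth hxstep hvstep
end
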